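/- Every instance of a-GASP admits an assignment in the weak core, i.e., an individually rational assignment π such that no nonempty set E of agents all assigned to a_∅ under π can strictly improve: there is no activity a_j ∈ A* with π^j = ∅ and nonempty E ⊆ π^0 such that (a_j, |E|) ∈ S_i for all i ∈ E. Moreover such an assignment can be obtained greedily. -/

import Mathlib

/-- The group of agents assigned to activity `a` under assignment `π`
(`none` stands for the void activity `a_∅`). -/
def grp {ι α : Type*} [Fintype ι] [DecidableEq α] (π : ι → Option α) (a : α) : Finset ι :=
  Finset.univ.filter (fun i => π i = some a)

/-- An assignment is individually rational if every agent assigned to a non-void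
activity `a` approves the alternative `(a, size of the group doing a)`.
`S i a` is the set of group sizes `k` such that agent `i` approves `(a, k)`. -/
def IndivRat {ι α : Type*} [Fintype ι] [DecidableEq α]
    (S : ι → α → Finset ℕ) (π : ι → Option α) : Prop :=
  ∀ i a, π i = some a → (grp π a).card ∈ S i a

/-- Nash stability: individual rationality plus no agent assigned to the void
activity approves joining an existing group. -/
def NashStable {ι α : Type*} [Fintype ι] [DecidableEq α]
    (S : ι → α → Finset ℕ) (π : ι → Option α) : Prop :=
  IndivRat S π ∧ ∀ i a, π i = none → (grp π a).card + 1 ∉ S i a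

/-- The number of agents assigned to a non-void activity. -/
def numActive {ι α : Type*} [Fintype ι] [DecidableEq α] (π : ι → Option α) : ℕ :=
  (Finset.univ.filter (fun i => π i ≠ none)).card

/-!
An individually rational assignment with the largest possible number of active agents is in
the weak core: if a coalition of idle agents could deviate to an unused activity, moving it
there would keep the assignment individually rational (no one else shares that activity, and
all other groups are unchanged) while strictly increasing the number of active agents.
-/

theorem exists_max_image_of_le {β : Type*} {p : β → Prop} (f : β → ℕ) (N : ℕ)
    (hp : ∃ x, p x) (hf : ∀ x, p x → f x ≤ N) :
    ∃ x, p x ∧ ∀ y, p y → f y ≤ f x := by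
  have hne : (f '' {x | p x}).Nonempty := hp.elim fun x hx => ⟨f x, x, hx, rfl⟩
  have hbdd : BddAbove (f '' {x | p x}) := ⟨N, by rintro _ ⟨x, hx, rfl⟩; exact hf x hx⟩
  obtain ⟨x, hx, hfx⟩ := Nat.sSup_mem hne hbdd
  exact ⟨x, hx, fun y hy => hfx ▸ le_csSup hbdd ⟨y, hy, rfl⟩⟩

section Deviation

variable {ι α : Type*}

def deviate [DecidableEq ι] (π : ι → Option α) (E : Finset ι) (a : α) : ι → Option α :=
  fun i => if i ∈ E then some a else π i

@[simp]
theorem deviate_of_mem [DecidableEq ι] {π : ι → Option α} {E : Finset ι} {a : α} {i : ι}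
    (hi : i ∈ E) : deviate π E a i = some a :=
  if_pos hi

@[simp]
theorem deviate_of_notMem [DecidableEq ι] {π : ι → Option α} {E : Finset ι} {a : α} {i : ι}
    (hi : i ∉ E) : deviate π E a i = π i :=
  if_neg hi

variable [Fintype ι] [DecidableEq α] {π : ι → Option α} {a : α}

@[simp]
theorem mem_grp {i : ι} : i ∈ grp π a ↔ π i = some a := by
  simp [grp]

theorem ne_some_of_grp_eq_empty (hgrp : grp π a = ∅) (i : ι) : π i ≠ some a := by
  simpa using Finset.eq_empty_iff_forall_notMem.mp hgrp i

variable [DecidableEq ι] {E : Finset ι}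

theorem grp_deviate_self (hgrp : grp π a = ∅) :
    grp (deviate π E a) a = E := by
  ext i
  by_cases hi : i ∈ E <;> simp [hi, ne_some_of_grp_eq_empty hgrp i]

theorem grp_deviate_of_ne (hidle : ∀ i ∈ E, π i = none) {b : α} (hb : b ≠ a) :
    grp (deviate π E a) b = grp π b := by
  ext i
  by_cases hi : i ∈ E <;> simp [hi, hidle, Ne.symm hb]

theorem IndivRat.deviate {S : ι → α → Finset ℕ} (hIR : IndivRat S π) (hgrp : grp π a = ∅)
    (hidle : ∀ i ∈ E, π i = none) (happrove : ∀ i ∈ E, E.card ∈ S i a) :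
    IndivRat S (deviate π E a) := by
  intro i b hib
  by_cases hi : i ∈ E
  · obtain rfl : a = b := by simpa [hi] using hib
    rw [grp_deviate_self hgrp]
    exact happrove i hi
  · have hπi : π i = some b := by simpa [hi] using hib
    have hba : b ≠ a := by
      rintro rfl
      exact ne_some_of_grp_eq_empty hgrp i hπi
    rw [grp_deviate_of_ne hidle hba]
    exact hIR i b hπi

theorem numActive_lt_deviate (hE : E.Nonempty) (hidle : ∀ i ∈ E, π i = none) :
    numActive π < numActive (deviate π E a) := by
  refine Finset.card_lt_card <| (Finset.ssubset_iff_of_subset fun i => ?_).mpr ?_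
  · simp only [Finset.mem_filter, Finset.mem_univ, true_and]
    by_cases hi : i ∈ E <;> simp [hi, hidle]
  · obtain ⟨i, hi⟩ := hE
    refine ⟨i, ?_, by simp [hidle i hi]⟩
    simp only [Finset.mem_filter, Finset.mem_univ, true_and]
    simp [hi]

end Deviation

theorem stmt14_general {ι α : Type*} [Fintype ι] [DecidableEq α]
    (S : ι → α → Finset ℕ) :
    ∃ π : ι → Option α, IndivRat S π ∧
      ∀ (a : α) (E : Finset ι), grp π a = ∅ → E.Nonempty →
        (∀ i ∈ E, π i = none) → ¬ ∀ i ∈ E, E.card ∈ S i a := by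
  classical
  obtain ⟨π, hIR, hmax⟩ := exists_max_image_of_le (p := IndivRat S) numActive (Fintype.card ι)
    ⟨fun _ => none, fun _ _ h => by simp at h⟩ fun _ _ => Finset.card_le_univ _
  refine ⟨π, hIR, fun a E hgrp hE hidle happrove => ?_⟩
  exact (hmax _ (hIR.deviate hgrp hidle happrove)).not_gt (numActive_lt_deviate hE hidle)

/-- Every a-GASP instance admits an assignment in the weak core: an individually
rational assignment π such that no nonempty coalition E of agents assigned to
the void activity can deviate to an unused activity a (one with an empty group)
with every member of E approving (a, |E|). -/
theorem stmt14 {ι α : Type*} [Fintype ι] [DecidableEq ι] [DecidableEq α] [Fintype α]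
    (S : ι → α → Finset ℕ) :
    ∃ π : ι → Option α, IndivRat S π ∧
      ∀ (a : α) (E : Finset ι), grp π a = ∅ → E.Nonempty →
        (∀ i ∈ E, π i = none) → ¬ ∀ i ∈ E, E.card ∈ S i a :=
  stmt14_general S
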